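/- Assume moreover the normalization Σ_n c_n = D_v/(4 r_T² k_f), and let f_c(t) = f_{c,1}(t) for 0 < t ≤ τ and f_c(t) = f_{c,2}(t) for t > τ. Then the asymptotic fraction of absorbed molecules satisfies lim_{t→∞} ∫₀^t f_c(u) H(t − u) du = H_∞ = w/√(D_σ k_d) − (w γ²/ζ) √(D_σ/k_d) + w γ/ζ. (Corollary 1.) -/

import Mathlib

open MeasureTheory Filter Topology

noncomputable def erf (x : ℝ) : ℝ := (2 / Real.sqrt Real.pi) * ∫ u in (0:ℝ)..x, Real.exp (-u ^ 2)

noncomputable def erfc (x : ℝ) : ℝ := 1 - erf x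

/-!
Write `a_n = D_v λ_n²`. The `n`-th mode of `f_c` is `C c_n x_n`, where `x_n` solves
`x' = a_n (𝟙_{[0, τ]} - x)`, `x 0 = 0`; integrating the equation gives `∫₀^∞ x_n = τ`, so
`∫₀^∞ f_c = C τ Σ c_n = 1` by the normalization (the interchange of sum and integral is justified
by `∫ |c_n x_n| = |c_n| τ`). The kernel `H` is continuous with limit `H_∞`: the only delicate term
is `exp (ζ t) erfc (γ √(D_σ t)) ≤ exp (ζ t - γ² D_σ t) = exp (-k_d t)`. Hence `H` is bounded on
`[0, ∞)`, and dominated convergence gives `∫₀^t f_c(u) H(t - u) du → (∫₀^∞ f_c) H_∞ = H_∞`.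
-/

open Real Set
open scoped ENNReal

lemma integrable_exp_neg_sq : Integrable fun u : ℝ => exp (-u ^ 2) := by
  simpa using integrable_exp_neg_mul_sq one_pos

lemma integral_Ioi_exp_neg_sq : ∫ u in Ioi (0 : ℝ), exp (-u ^ 2) = √π / 2 := by
  simpa using integral_gaussian_Ioi 1

lemma setIntegral_Ioi_comp_sub {E : Type*} [NormedAddCommGroup E] [NormedSpace ℝ E]
    (f : ℝ → E) (x : ℝ) : ∫ u in Ioi x, f (u - x) = ∫ u in Ioi 0, f u := by
  simpa using (measurePreserving_sub_right volume x).setIntegral_preimage_emb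
    (measurableEmbedding_subRight x) f (Ioi 0)

@[fun_prop]
lemma continuous_erf : Continuous erf :=
  continuous_const.mul <| intervalIntegral.continuous_primitive
    (fun _ _ => integrable_exp_neg_sq.intervalIntegrable) 0

lemma tendsto_erf_atTop : Tendsto erf atTop (𝓝 1) := by
  have h := intervalIntegral_tendsto_integral_Ioi 0 integrable_exp_neg_sq.integrableOn tendsto_id
  rw [integral_Ioi_exp_neg_sq] at h
  convert h.const_mul (2 / √π) using 2
  · rfl
  · field_simp

lemma erfc_eq_integral_Ioi (x : ℝ) : erfc x = 2 / √π * ∫ u in Ioi x, exp (-u ^ 2) := by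
  have h := intervalIntegral.integral_interval_add_Ioi (a := 0) (b := x)
    integrable_exp_neg_sq.integrableOn integrable_exp_neg_sq.integrableOn
  rw [integral_Ioi_exp_neg_sq] at h
  rw [erfc, erf, eq_sub_of_add_eq' h]
  field_simp

lemma erfc_nonneg (x : ℝ) : 0 ≤ erfc x := by
  rw [erfc_eq_integral_Ioi]
  exact mul_nonneg (by positivity) (setIntegral_nonneg measurableSet_Ioi fun _ _ => (exp_pos _).le)

lemma erfc_le_exp_neg_sq {x : ℝ} (hx : 0 ≤ x) : erfc x ≤ exp (-x ^ 2) := by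
  have htail : ∫ u in Ioi x, exp (-u ^ 2) ≤ ∫ u in Ioi x, exp (-x ^ 2) * exp (-(u - x) ^ 2) := by
    refine setIntegral_mono_on integrable_exp_neg_sq.integrableOn
      (((integrable_exp_neg_sq.comp_sub_right x).const_mul _).integrableOn) measurableSet_Ioi
      fun u hu => ?_
    rw [← exp_add, exp_le_exp]
    nlinarith [mem_Ioi.1 hu]
  rw [integral_const_mul, setIntegral_Ioi_comp_sub (fun v => exp (-v ^ 2)),
    integral_Ioi_exp_neg_sq] at htail
  calc erfc x ≤ 2 / √π * (exp (-x ^ 2) * (√π / 2)) := by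
        rw [erfc_eq_integral_Ioi]; gcongr
    _ = exp (-x ^ 2) := by field_simp

noncomputable def absorptionKernel (Dσ kd γ w ζ t : ℝ) : ℝ :=
  w / √(kd * Dσ) * erf √(kd * t) -
    w * γ / ζ * (exp (ζ * t) * erfc (γ * √(Dσ * t)) + γ * √(Dσ / kd) * erf √(kd * t) - 1)

lemma continuous_absorptionKernel (Dσ kd γ w ζ : ℝ) :
    Continuous (absorptionKernel Dσ kd γ w ζ) := by
  unfold absorptionKernel erfc
  fun_prop

lemma tendsto_erf_sqrt_mul_atTop {k : ℝ} (hk : 0 < k) :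
    Tendsto (fun t => erf √(k * t)) atTop (𝓝 1) :=
  tendsto_erf_atTop.comp <| tendsto_sqrt_atTop.comp <| tendsto_id.const_mul_atTop hk

lemma tendsto_exp_mul_erfc_atTop {Dσ kd γ : ℝ} (hDσ : 0 ≤ Dσ) (hkd : 0 < kd) (hγ : 0 ≤ γ) :
    Tendsto (fun t => exp ((γ ^ 2 * Dσ - kd) * t) * erfc (γ * √(Dσ * t))) atTop (𝓝 0) := by
  have hdecay : Tendsto (fun t => exp (-(kd * t))) atTop (𝓝 0) :=
    tendsto_exp_atBot.comp <| tendsto_neg_atTop_atBot.comp <| tendsto_id.const_mul_atTop hkd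
  refine tendsto_of_tendsto_of_tendsto_of_le_of_le' tendsto_const_nhds hdecay
    (Eventually.of_forall fun t => mul_nonneg (exp_pos _).le (erfc_nonneg _)) ?_
  filter_upwards [eventually_ge_atTop 0] with t ht
  calc exp ((γ ^ 2 * Dσ - kd) * t) * erfc (γ * √(Dσ * t))
      ≤ exp ((γ ^ 2 * Dσ - kd) * t) * exp (-(γ * √(Dσ * t)) ^ 2) := by
        gcongr; exact erfc_le_exp_neg_sq (by positivity)
    _ = exp (-(kd * t)) := by
        rw [← exp_add, mul_pow, sq_sqrt (by positivity)]; ring_nf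

lemma tendsto_absorptionKernel_atTop {Dσ kd γ ζ : ℝ} (w : ℝ) (hDσ : 0 ≤ Dσ) (hkd : 0 < kd)
    (hγ : 0 ≤ γ) (hζ : ζ = γ ^ 2 * Dσ - kd) :
    Tendsto (absorptionKernel Dσ kd γ w ζ) atTop
      (𝓝 (w / √(Dσ * kd) - w * γ ^ 2 / ζ * √(Dσ / kd) + w * γ / ζ)) := by
  have herf := tendsto_erf_sqrt_mul_atTop hkd
  have hexp := tendsto_exp_mul_erfc_atTop hDσ hkd hγ
  rw [← hζ] at hexp
  have h := (herf.const_mul (w / √(kd * Dσ))).sub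
    (((hexp.add (herf.const_mul (γ * √(Dσ / kd)))).sub_const 1).const_mul (w * γ / ζ))
  convert h using 2
  · rfl
  · rw [mul_comm Dσ kd]
    ring

lemma exists_forall_ge_norm_le_of_tendsto {E : Type*} [NormedAddCommGroup E] {g : ℝ → E} {L : E}
    (hg : Continuous g) (hgL : Tendsto g atTop (𝓝 L)) (a : ℝ) : ∃ M, ∀ s ≥ a, ‖g s‖ ≤ M := by
  obtain ⟨S, hS, hbdd⟩ := Metric.exists_isBounded_image_of_tendsto hgL
  obtain ⟨T, hT⟩ := mem_atTop_sets.1 hS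
  obtain ⟨M, hM⟩ := isBounded_iff_forall_norm_le.1
    (hbdd.union ((isCompact_Icc (a := a) (b := T)).image hg).isBounded)
  refine ⟨M, fun s hs => hM _ ?_⟩
  rcases le_total s T with h | h
  · exact Or.inr ⟨s, ⟨hs, h⟩, rfl⟩
  · exact Or.inl ⟨s, hT s h, rfl⟩

theorem tendsto_integral_mul_sub_atTop {f g : ℝ → ℝ} {L : ℝ} (hf : IntegrableOn f (Ioi 0))
    (hg : Continuous g) (hgL : Tendsto g atTop (𝓝 L)) :
    Tendsto (fun t => ∫ u in 0..t, f u * g (t - u)) atTop (𝓝 ((∫ u in Ioi 0, f u) * L)) := by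
  obtain ⟨M, hM⟩ := exists_forall_ge_norm_le_of_tendsto hg hgL 0
  have hM0 : 0 ≤ M := (norm_nonneg _).trans (hM 0 le_rfl)
  have hrepr (t : ℝ) (ht : 0 ≤ t) : ∫ u in 0..t, f u * g (t - u) =
      ∫ u in Ioi 0, (Iic t).indicator (fun u => f u * g (t - u)) u := by
    rw [setIntegral_indicator measurableSet_Iic, Ioi_inter_Iic, intervalIntegral.integral_of_le ht]
  rw [← integral_mul_const]
  refine (tendsto_integral_filter_of_dominated_convergence
    (F := fun t u => (Iic t).indicator (fun u => f u * g (t - u)) u) (fun u => ‖f u‖ * M)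
    (Eventually.of_forall fun t => ?_) (Eventually.of_forall fun t => ?_) (hf.norm.mul_const M)
    (Eventually.of_forall fun u => ?_)).congr' ?_
  · exact (hf.aestronglyMeasurable.mul
      (hg.comp (continuous_sub_left t)).aestronglyMeasurable).indicator measurableSet_Iic
  · refine Eventually.of_forall fun u => ?_
    by_cases hut : u ≤ t
    · rw [indicator_of_mem (mem_Iic.2 hut), norm_mul]
      exact mul_le_mul_of_nonneg_left (hM _ (sub_nonneg.2 hut)) (norm_nonneg _)
    · rw [indicator_of_notMem (notMem_Iic.2 (not_le.1 hut)), norm_zero]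
      positivity
  · have hshift : Tendsto (fun t => t - u) atTop atTop :=
      tendsto_atTop_add_const_right _ _ tendsto_id
    refine ((hgL.comp hshift).const_mul (f u)).congr' ?_
    filter_upwards [eventually_ge_atTop u] with t hut
    rw [indicator_of_mem (mem_Iic.2 hut)]
    rfl
  · filter_upwards [eventually_ge_atTop 0] with t ht
    exact (hrepr t ht).symm

lemma integrable_tsum_of_summable_integral_norm {α E : Type*} [MeasurableSpace α] {μ : Measure α}
    [NormedAddCommGroup E] [CompleteSpace E] {F : ℕ → α → E} (hF_int : ∀ n, Integrable (F n) μ)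
    (hF_sum : Summable fun n => ∫ a, ‖F n a‖ ∂μ) : Integrable (fun a => ∑' n, F n a) μ := by
  have hlint : ∑' n, ∫⁻ a, ‖F n a‖ₑ ∂μ ≠ ∞ := by
    simp_rw [← ofReal_integral_norm_eq_lintegral_enorm (hF_int _)]
    rw [← ENNReal.ofReal_tsum_of_nonneg (fun n => integral_nonneg fun a => norm_nonneg _) hF_sum]
    exact ENNReal.ofReal_ne_top
  have hsummable : ∀ᵐ a ∂μ, Summable fun n => ‖F n a‖ :=
    summable_norm_of_tsum_eLpNorm_ne_top le_rfl (fun n => (hF_int n).1)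
      (by simpa only [eLpNorm_one_eq_lintegral_enorm] using hlint)
  refine ⟨aestronglyMeasurable_of_tendsto_ae atTop
    (fun N => Finset.aestronglyMeasurable_sum (Finset.range N) fun n _ => (hF_int n).1)
    (hsummable.mono fun a ha => ?_), ?_⟩
  · simpa only [Finset.sum_apply] using ha.of_norm.hasSum.tendsto_sum_nat
  · calc ∫⁻ a, ‖∑' n, F n a‖ₑ ∂μ ≤ ∫⁻ a, ∑' n, ‖F n a‖ₑ ∂μ :=
          lintegral_mono fun a => enorm_tsum_le_tsum_enorm
      _ = ∑' n, ∫⁻ a, ‖F n a‖ₑ ∂μ := lintegral_tsum fun n => (hF_int n).1.enorm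
      _ < ∞ := hlint.lt_top

lemma integral_Ioi_exp_neg_mul {a : ℝ} (ha : 0 < a) (s : ℝ) :
    ∫ t in Ioi s, exp (-(a * t)) = exp (-(a * s)) / a := by
  simpa [neg_mul, neg_div_neg_eq] using integral_exp_mul_Ioi (neg_lt_zero.2 ha) s

lemma integrableOn_Ioi_exp_neg_mul {a : ℝ} (ha : 0 < a) (s : ℝ) :
    IntegrableOn (fun t => exp (-(a * t))) (Ioi s) := by
  simpa [neg_mul] using exp_neg_integrableOn_Ioi s ha

/-- The solution of `x' = a (𝟙_{[0, τ]} - x)`, `x 0 = 0`. -/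
noncomputable def pulseResponse (a τ t : ℝ) : ℝ :=
  if t ≤ τ then 1 - exp (-(a * t)) else exp (-(a * (t - τ))) - exp (-(a * t))

section pulseResponse

variable {a τ t : ℝ}

lemma pulseResponse_of_le (h : t ≤ τ) : pulseResponse a τ t = 1 - exp (-(a * t)) := if_pos h

lemma pulseResponse_of_lt (h : τ < t) :
    pulseResponse a τ t = (exp (a * τ) - 1) * exp (-(a * t)) := by
  rw [pulseResponse, if_neg (not_le.2 h), sub_mul, one_mul, ← exp_add]
  ring_nf

lemma pulseResponse_nonneg (ha : 0 ≤ a) (hτ : 0 ≤ τ) (ht : 0 ≤ t) : 0 ≤ pulseResponse a τ t := by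
  rcases le_or_gt t τ with h | h
  · rw [pulseResponse_of_le h, sub_nonneg, exp_le_one_iff, neg_nonpos]
    positivity
  · rw [pulseResponse_of_lt h]
    exact mul_nonneg (sub_nonneg.2 (one_le_exp (by positivity))) (exp_pos _).le

lemma integrableOn_Ioi_pulseResponse (ha : 0 < a) (s : ℝ) :
    IntegrableOn (pulseResponse a τ) (Ioi s) := by
  have hon : IntegrableOn (pulseResponse a τ) (Ioc s τ) :=
    (by fun_prop : Continuous fun t => 1 - exp (-(a * t))).integrableOn_Ioc.congr_fun
      (fun t ht => (pulseResponse_of_le ht.2).symm) measurableSet_Ioc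
  have hoff : IntegrableOn (pulseResponse a τ) (Ioi τ) :=
    IntegrableOn.congr_fun ((integrableOn_Ioi_exp_neg_mul ha τ).const_mul _)
      (fun t ht => (pulseResponse_of_lt ht).symm) measurableSet_Ioi
  refine (hon.union hoff).mono_set fun t ht => ?_
  rcases le_or_gt t τ with h | h
  exacts [Or.inl ⟨ht, h⟩, Or.inr h]

lemma integral_Ioi_pulseResponse (ha : 0 < a) (hτ : 0 ≤ τ) :
    ∫ t in Ioi 0, pulseResponse a τ t = τ := by
  have hon : ∫ t in 0..τ, pulseResponse a τ t = τ - (1 - exp (-(a * τ))) / a := by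
    have hexp := intervalIntegral.integral_interval_add_Ioi (a := 0) (b := τ)
      (integrableOn_Ioi_exp_neg_mul ha 0) (integrableOn_Ioi_exp_neg_mul ha τ)
    rw [intervalIntegral.integral_congr (g := fun t => 1 - exp (-(a * t)))
      fun t ht => pulseResponse_of_le (by rw [uIcc_of_le hτ] at ht; exact ht.2),
      intervalIntegral.integral_sub intervalIntegrable_const
        ((by fun_prop : Continuous fun t => exp (-(a * t))).intervalIntegrable 0 τ),
      eq_sub_of_add_eq hexp, integral_Ioi_exp_neg_mul ha, integral_Ioi_exp_neg_mul ha]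
    simp only [intervalIntegral.integral_const, sub_zero, smul_eq_mul, mul_one, mul_zero, neg_zero,
      exp_zero]
    ring
  have hoff : ∫ t in Ioi τ, pulseResponse a τ t = (1 - exp (-(a * τ))) / a := by
    rw [setIntegral_congr_fun measurableSet_Ioi fun t ht => pulseResponse_of_lt ht,
      integral_const_mul, integral_Ioi_exp_neg_mul ha, mul_div_assoc', sub_mul, one_mul, ← exp_add,
      add_neg_cancel, exp_zero]
  rw [← intervalIntegral.integral_interval_add_Ioi (integrableOn_Ioi_pulseResponse ha 0)
    (integrableOn_Ioi_pulseResponse ha τ), hon, hoff]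
  ring

lemma integral_norm_mul_pulseResponse (c : ℝ) (ha : 0 < a) (hτ : 0 ≤ τ) :
    ∫ t in Ioi 0, ‖c * pulseResponse a τ t‖ = |c| * τ := by
  rw [setIntegral_congr_fun measurableSet_Ioi fun t ht => by
      rw [norm_mul, Real.norm_eq_abs, Real.norm_of_nonneg (pulseResponse_nonneg ha.le hτ ht.le)],
    integral_const_mul, integral_Ioi_pulseResponse ha hτ]

end pulseResponse

section tsum

variable {a c : ℕ → ℝ} {τ : ℝ}

lemma summable_integral_norm_mul_pulseResponse (ha : ∀ n, 0 < a n) (hτ : 0 ≤ τ)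
    (hc : Summable fun n => |c n|) :
    Summable fun n => ∫ t in Ioi 0, ‖c n * pulseResponse (a n) τ t‖ := by
  simpa only [integral_norm_mul_pulseResponse _ (ha _) hτ] using hc.mul_right τ

lemma integrableOn_tsum_mul_pulseResponse (ha : ∀ n, 0 < a n) (hτ : 0 ≤ τ)
    (hc : Summable fun n => |c n|) :
    IntegrableOn (fun t => ∑' n, c n * pulseResponse (a n) τ t) (Ioi 0) :=
  integrable_tsum_of_summable_integral_norm
    (fun n => (integrableOn_Ioi_pulseResponse (ha n) 0).const_mul (c n))
    (summable_integral_norm_mul_pulseResponse ha hτ hc)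

lemma integral_tsum_mul_pulseResponse (ha : ∀ n, 0 < a n) (hτ : 0 ≤ τ)
    (hc : Summable fun n => |c n|) :
    ∫ t in Ioi 0, ∑' n, c n * pulseResponse (a n) τ t = τ * ∑' n, c n := by
  rw [← integral_tsum_of_summable_integral_norm
    (fun n => (integrableOn_Ioi_pulseResponse (ha n) 0).const_mul (c n))
    (summable_integral_norm_mul_pulseResponse ha hτ hc)]
  simp_rw [integral_const_mul, integral_Ioi_pulseResponse (ha _) hτ]
  rw [tsum_mul_right, mul_comm]

end tsum

theorem stmt_10_general
    (rT kf μ Nv Dv : ℝ)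
    (hrT : 0 < rT) (hkf : 0 < kf) (hμ : 0 < μ) (hNv : 0 < Nv) (hDv : 0 < Dv)
    (τ : ℝ) (hτ : τ = Nv / μ)
    (C : ℝ) (hCdef : C = 4 * rT ^ 2 * kf * μ / (Nv * Dv))
    (lam : ℕ → ℝ) (hlam : ∀ n, 0 < lam n)
    (c : ℕ → ℝ)
    (hsum : Summable fun n => |c n|)
    (fc1 : ℝ → ℝ)
    (hfc1 : ∀ t, fc1 t = C * ∑' n, c n * (1 - Real.exp (-(Dv * lam n ^ 2 * t))))
    (fc2 : ℝ → ℝ)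
    (hfc2 : ∀ t, fc2 t = C * ∑' n, c n *
          (Real.exp (-(Dv * lam n ^ 2 * (t - τ))) - Real.exp (-(Dv * lam n ^ 2 * t))))
    (Dσ kd γ w : ℝ) (hDσ : 0 < Dσ) (hkd : 0 < kd) (hγ : 0 < γ)
    (ζ : ℝ) (hζdef : ζ = γ ^ 2 * Dσ - kd)
    (H : ℝ → ℝ)
    (hH : ∀ t, 0 < t → H t = w / Real.sqrt (kd * Dσ) * erf (Real.sqrt (kd * t)) -
          w * γ / ζ * (Real.exp (ζ * t) * erfc (γ * Real.sqrt (Dσ * t)) +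
            γ * Real.sqrt (Dσ / kd) * erf (Real.sqrt (kd * t)) - 1))
    (Hinf : ℝ)
    (hHinf : Hinf = w / Real.sqrt (Dσ * kd) - w * γ ^ 2 / ζ * Real.sqrt (Dσ / kd) + w * γ / ζ)
    (hnorm : ∑' n, c n = Dv / (4 * rT ^ 2 * kf))
    (fc : ℝ → ℝ)
    (hfca : ∀ t, 0 < t → t ≤ τ → fc t = fc1 t)
    (hfcb : ∀ t, τ < t → fc t = fc2 t) :
    Tendsto (fun t => ∫ u in (0:ℝ)..t, fc u * H (t - u)) atTop (𝓝 Hinf) := by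
  have ha (n : ℕ) : 0 < Dv * lam n ^ 2 := by have := hlam n; positivity
  have hτ0 : 0 ≤ τ := by rw [hτ]; positivity
  have hfc : EqOn fc (fun t => C * ∑' n, c n * pulseResponse (Dv * lam n ^ 2) τ t) (Ioi 0) := by
    intro t ht
    rcases le_or_gt t τ with h | h
    · simp only [hfca t ht h, hfc1, pulseResponse_of_le h]
    · simp only [hfcb t h, hfc2, pulseResponse, if_neg (not_le.2 h)]
  have hfc_int : IntegrableOn fc (Ioi 0) :=
    IntegrableOn.congr_fun ((integrableOn_tsum_mul_pulseResponse ha hτ0 hsum).const_mul C)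
      hfc.symm measurableSet_Ioi
  have hfc_total : ∫ t in Ioi 0, fc t = 1 := by
    rw [setIntegral_congr_fun measurableSet_Ioi hfc, integral_const_mul,
      integral_tsum_mul_pulseResponse ha hτ0 hsum, hnorm, hCdef, hτ]
    field_simp
  have hconv := tendsto_integral_mul_sub_atTop hfc_int (continuous_absorptionKernel Dσ kd γ w ζ)
    (tendsto_absorptionKernel_atTop w hDσ.le hkd hγ.le hζdef)
  rw [hfc_total, one_mul, ← hHinf] at hconv
  refine hconv.congr' ?_
  filter_upwards [eventually_gt_atTop 0] with t ht
  -- `H` is only specified on `(0, ∞)`; the endpoint `u = t` is a null set.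
  refine intervalIntegral.integral_congr_ae ?_
  filter_upwards [Measure.ae_ne volume t] with u hut hu
  rw [uIoc_of_le ht.le] at hu
  rw [hH (t - u) (sub_pos.2 (lt_of_le_of_ne hu.2 hut))]
  rfl

theorem stmt_10
    (rT kf μ Nv Dv : ℝ)
    (hrT : 0 < rT) (hkf : 0 < kf) (hμ : 0 < μ) (hNv : 0 < Nv) (hDv : 0 < Dv)
    (τ : ℝ) (hτ : τ = Nv / μ)
    (C : ℝ) (hCdef : C = 4 * rT ^ 2 * kf * μ / (Nv * Dv))
    (lam : ℕ → ℝ) (hlam : ∀ n, 0 < lam n)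
    (hne : ∀ n, 2 * lam n * rT ≠ Real.sin (2 * lam n * rT))
    (c : ℕ → ℝ)
    (hc : ∀ n, c n = lam n * (Real.sin (lam n * rT) / (lam n * rT)) /
          (2 * lam n * rT - Real.sin (2 * lam n * rT)))
    (hsum : Summable fun n => |c n|)
    (fc1 : ℝ → ℝ)
    (hfc1 : ∀ t, fc1 t = C * ∑' n, c n * (1 - Real.exp (-(Dv * lam n ^ 2 * t))))
    (fc2 : ℝ → ℝ)
    (hfc2 : ∀ t, fc2 t = C * ∑' n, c n *
          (Real.exp (-(Dv * lam n ^ 2 * (t - τ))) - Real.exp (-(Dv * lam n ^ 2 * t))))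
    (Dσ kd γ w : ℝ) (hDσ : 0 < Dσ) (hkd : 0 < kd) (hγ : 0 < γ)
    (ζ : ℝ) (hζdef : ζ = γ ^ 2 * Dσ - kd) (hζ : ζ ≠ 0)
    (H : ℝ → ℝ)
    (hH : ∀ t, 0 < t → H t = w / Real.sqrt (kd * Dσ) * erf (Real.sqrt (kd * t)) -
          w * γ / ζ * (Real.exp (ζ * t) * erfc (γ * Real.sqrt (Dσ * t)) +
            γ * Real.sqrt (Dσ / kd) * erf (Real.sqrt (kd * t)) - 1))
    (Hinf : ℝ)
    (hHinf : Hinf = w / Real.sqrt (Dσ * kd) - w * γ ^ 2 / ζ * Real.sqrt (Dσ / kd) + w * γ / ζ)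
    (hnorm : ∑' n, c n = Dv / (4 * rT ^ 2 * kf))
    (fc : ℝ → ℝ)
    (hfca : ∀ t, 0 < t → t ≤ τ → fc t = fc1 t)
    (hfcb : ∀ t, τ < t → fc t = fc2 t) :
    Tendsto (fun t => ∫ u in (0:ℝ)..t, fc u * H (t - u)) atTop (𝓝 Hinf) :=
  stmt_10_general rT kf μ Nv Dv hrT hkf hμ hNv hDv τ hτ C hCdef lam hlam c hsum fc1 hfc1 fc2 hfc2 Dσ
    kd γ w hDσ hkd hγ ζ hζdef H hH Hinf hHinf hnorm fc hfca hfcb
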